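/- Let N be odd and A ≥ (N−1)D with D > 0. The vector x* with x*_n = (n−1)D for n ≤ ⌊N/2⌋ and x*_n = A − (N−n)D for n > ⌊N/2⌋ satisfies var(x*) = ((N−1)(N+1)/(12N²))(3A² − 3(N−2)DA + (N²−3N+3)D²). -/
import Mathlib


open Finset

noncomputable def mean {N : ℕ} (x : Fin N → ℝ) : ℝ := (∑ n, x n) / N

noncomputable def svar {N : ℕ} (x : Fin N → ℝ) : ℝ :=
  (∑ n, (x n) ^ 2) / N - (mean x) ^ 2

/-- The optimal 1D MA positions (0-indexed): the first ⌊N/2⌋ antennas are packed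
at the left end with spacing `D`, the rest at the right end of `[0, A]`. -/
noncomputable def xstar (N : ℕ) (A D : ℝ) : Fin N → ℝ := fun n =>
  if (n : ℕ) < N / 2 then (n : ℕ) * D else A - ((N - 1 - (n : ℕ) : ℕ) : ℝ) * D

lemma sum_id_real (m : ℕ) : ∑ i ∈ range m, (i : ℝ) = m * (m - 1) / 2 := by
  induction m with
  | zero => simp
  | succ n ih => rw [Finset.sum_range_succ, ih]; push_cast; ring

lemma sum_sq_real (m : ℕ) : ∑ i ∈ range m, (i : ℝ) ^ 2 = m * (m - 1) * (2 * m - 1) / 6 := by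
  induction m with
  | zero => simp
  | succ n ih => rw [Finset.sum_range_succ, ih]; push_cast; ring

theorem var_xstar_odd (N : ℕ) (hN : 2 ≤ N) (hNo : Odd N) (A D : ℝ)
    (hD : 0 < D) (hA : ((N : ℝ) - 1) * D ≤ A) :
    svar (xstar N A D) =
      (((N : ℝ) - 1) * ((N : ℝ) + 1) / (12 * (N : ℝ) ^ 2)) *
        (3 * A ^ 2 - 3 * ((N : ℝ) - 2) * D * A
          + ((N : ℝ) ^ 2 - 3 * (N : ℝ) + 3) * D ^ 2) := by
  obtain ⟨m, hm⟩ := hNo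
  subst hm
  have hhalf : (2 * m + 1) / 2 = m := by omega
  set f : ℕ → ℝ := fun i =>
    if i < m then (i : ℝ) * D else A - ((2 * m + 1 - 1 - i : ℕ) : ℝ) * D with hf
  have hx : ∀ n : Fin (2 * m + 1), xstar (2 * m + 1) A D n = f (n : ℕ) := by
    intro n; simp [xstar, hf, hhalf]
  have hsplit : ∀ g : ℕ → ℝ, ∑ i ∈ range (2 * m + 1), g i =
      (∑ i ∈ range m, g i) + ∑ i ∈ range (m + 1), g (m + i) := by
    intro g
    have : 2 * m + 1 = m + (m + 1) := by omega
    rw [this, Finset.sum_range_add]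
  have hfst : ∀ i ∈ range m, f i = (i : ℝ) * D := by
    intro i hi; simp only [hf]; rw [if_pos (Finset.mem_range.mp hi)]
  have hsnd : ∀ i ∈ range (m + 1), f (m + i) = A - (m : ℝ) * D + (i : ℝ) * D := by
    intro i hi
    have hi2 : i ≤ m := Nat.lt_succ_iff.mp (Finset.mem_range.mp hi)
    simp only [hf]
    rw [if_neg (by omega)]
    have : (2 * m + 1 - 1 - (m + i)) = m - i := by omega
    rw [this, Nat.cast_sub hi2]
    ring
  have hS1 : ∑ n : Fin (2 * m + 1), xstar (2 * m + 1) A D n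
      = ((m : ℝ) + 1) * A - (m : ℝ) * D := by
    rw [Fintype.sum_congr _ _ hx, Fin.sum_univ_eq_sum_range, hsplit,
      Finset.sum_congr rfl hfst, Finset.sum_congr rfl hsnd, ← Finset.sum_mul, sum_id_real]
    simp only [Finset.sum_add_distrib, Finset.sum_const, Finset.card_range, nsmul_eq_mul,
      ← Finset.sum_mul, sum_id_real]
    push_cast; ring
  have hS2 : ∑ n : Fin (2 * m + 1), (xstar (2 * m + 1) A D n) ^ 2
      = D ^ 2 * ((m : ℝ) * (m - 1) * (2 * m - 1) / 6)
        + ((m : ℝ) + 1) * (A - m * D) ^ 2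
        + 2 * (A - m * D) * D * (((m : ℝ) + 1) * m / 2)
        + D ^ 2 * (((m : ℝ) + 1) * m * (2 * m + 1) / 6) := by
    have hx2 : ∀ n : Fin (2 * m + 1), (xstar (2 * m + 1) A D n) ^ 2 = (f (n : ℕ)) ^ 2 := by
      intro n; rw [hx]
    rw [Fintype.sum_congr _ _ hx2, Fin.sum_univ_eq_sum_range (fun i => f i ^ 2), hsplit]
    have h1 : ∑ i ∈ range m, (f i) ^ 2 = D ^ 2 * ((m : ℝ) * (m - 1) * (2 * m - 1) / 6) := by
      rw [Finset.sum_congr rfl (fun i hi => by rw [hfst i hi])]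
      have : ∀ i ∈ range m, ((i : ℝ) * D) ^ 2 = D ^ 2 * (i : ℝ) ^ 2 := fun i _ => by ring
      rw [Finset.sum_congr rfl this, ← Finset.mul_sum, sum_sq_real]
    have h2 : ∑ i ∈ range (m + 1), (f (m + i)) ^ 2
        = ((m : ℝ) + 1) * (A - m * D) ^ 2
          + 2 * (A - m * D) * D * (((m : ℝ) + 1) * m / 2)
          + D ^ 2 * (((m : ℝ) + 1) * m * (2 * m + 1) / 6) := by
      have : ∀ i ∈ range (m + 1), (f (m + i)) ^ 2
          = (A - (m : ℝ) * D) ^ 2 + (2 * (A - (m : ℝ) * D) * D) * (i : ℝ)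
            + D ^ 2 * (i : ℝ) ^ 2 := by
        intro i hi; rw [hsnd i hi]; ring
      rw [Finset.sum_congr rfl this]
      simp only [Finset.sum_add_distrib, Finset.sum_const, Finset.card_range, nsmul_eq_mul,
        ← Finset.mul_sum, sum_id_real, sum_sq_real]
      push_cast; ring
    rw [h1, h2]; ring
  have hNne : ((2 * m + 1 : ℕ) : ℝ) ≠ 0 := by positivity
  simp only [svar, mean, hS1, hS2]
  field_simp
  push_cast
  ring
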